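/- Consider the networked SAIR(S) model with δ_i = 0 for all i, symmetric nonnegative adjacency matrix W, positive diagonal matrices B = diag(β_i), K = diag(κ_i), Γ = diag(γ_i), Σ = diag(σ_i), and q ∈ [0,1]. If the 2n×2n block matrix [[qW, (1/2)W], [(1/2)W, (1−q)W]] is strictly less than [[B⁻¹(Σ+K), −(1/2)B⁻¹Σ], [−(1/2)B⁻¹Σ, B⁻¹Γ]] in the positive-definite (Loewner) order, then for every solution with initial condition in the simplex (all components in [0,1] and s_i(0)+a_i(0)+p_i(0)+r_i(0) = 1 for all i), a_i(t) → 0 and p_i(t) → 0 as t → ∞ for all i. -/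

import Mathlib

/-!
Two facts drive the proof. First, the nonnegative orthant is invariant: for given `a`, `p`
each `sᵢ` solves a scalar linear equation, and once `s ≥ 0` the pair `(a, p)` solves a linear
system whose matrix has nonnegative off-diagonal entries; for such systems the squared negative
parts obey a Grönwall inequality with zero initial value. Since `δ = 0`, `s` is then
nonincreasing, so `s ≤ 1`. Second, `V = ∑ᵢ βᵢ⁻¹ (aᵢ² + pᵢ²)` is a Lyapunov function: using
`s ≤ 1` and the symmetry of `W`, `V' ≤ -2 yᵀ M y` with `y = (a, p)` and `M` the positive
definite Loewner gap, and `yᵀ M y ≥ ε V`, so `V` decays exponentially.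
-/

open Matrix Filter Set Real Topology

theorem le_mul_exp_of_hasDerivAt_le_mul {f f' : ℝ → ℝ} {K T : ℝ} (hT : 0 ≤ T)
    (hf : ∀ t ∈ Icc 0 T, HasDerivAt f (f' t) t) (bound : ∀ t ∈ Ico 0 T, f' t ≤ K * f t) :
    f T ≤ f 0 * exp (K * T) := by
  have := le_gronwallBound_of_liminf_deriv_right_le (δ := f 0) (ε := 0)
    (fun t ht => (hf t ht).continuousAt.continuousWithinAt)
    (fun t ht _ hr => (hf t (Ico_subset_Icc_self ht)).hasDerivWithinAt.liminf_right_slope_le hr)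
    le_rfl (by simpa using bound) T ⟨hT, le_rfl⟩
  simpa [gronwallBound_ε0] using this

theorem tendsto_zero_of_sq_le {α : Type*} {l : Filter α} {f g : α → ℝ}
    (hg : Tendsto g l (𝓝 0)) (hfg : ∀ᶠ x in l, f x ^ 2 ≤ g x) : Tendsto f l (𝓝 0) := by
  have hsq : Tendsto (fun x => f x ^ 2) l (𝓝 0) :=
    tendsto_of_tendsto_of_tendsto_of_le_of_le' tendsto_const_nhds hg
      (Eventually.of_forall fun x => sq_nonneg _) hfg
  have habs : Tendsto (fun x => |f x|) l (𝓝 0) := by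
    simpa only [Real.sqrt_sq_eq_abs, Real.sqrt_zero] using hsq.sqrt
  exact (tendsto_zero_iff_abs_tendsto_zero f).mpr habs

theorem hasDerivAt_min_zero_sq (x : ℝ) : HasDerivAt (fun y => min y 0 ^ 2) (2 * min x 0) x := by
  refine hasDerivAt_of_hasDerivAt_of_ne' (f := fun y => min y 0 ^ 2) (g := fun y => 2 * min y 0)
    (x := 0) (fun y hy => ?_) (by fun_prop) (by fun_prop) x
  rcases hy.lt_or_gt with hy | hy
  · have hloc : (fun z : ℝ => min z 0 ^ 2) =ᶠ[𝓝 y] fun z => z ^ 2 :=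
      (eventually_lt_nhds hy).mono fun z hz => by simp [min_eq_left hz.le]
    rw [min_eq_left hy.le]
    simpa using (hasDerivAt_pow 2 y).congr_of_eventuallyEq hloc
  · have hloc : (fun z : ℝ => min z 0 ^ 2) =ᶠ[𝓝 y] fun _ => 0 :=
      (eventually_gt_nhds hy).mono fun z hz => by simp [min_eq_right hz.le]
    rw [min_eq_right hy.le, mul_zero]
    exact (hasDerivAt_const y 0).congr_of_eventuallyEq hloc

theorem sum_two_mul_min_zero_mul_mulVec_le {ι : Type*} [Fintype ι] {A : Matrix ι ι ℝ} {C : ℝ}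
    (hC : ∀ k l, |A k l| ≤ C) (hA : ∀ k l, k ≠ l → 0 ≤ A k l) (x : ι → ℝ) :
    ∑ k, 2 * min (x k) 0 * (A *ᵥ x) k ≤ 2 * C * Fintype.card ι * ∑ k, min (x k) 0 ^ 2 := by
  have hterm : ∀ k l,
      2 * min (x k) 0 * (A k l * x l) ≤ C * (min (x k) 0 ^ 2 + min (x l) 0 ^ 2) := by
    intro k l
    have hmk : min (x k) 0 ≤ 0 := min_le_right _ _
    have hml : min (x l) 0 ≤ x l := min_le_left _ _
    have hC' := abs_le.mp (hC k l)
    by_cases hkl : k = l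
    · subst hkl
      have hsq : min (x k) 0 * x k = min (x k) 0 ^ 2 := by
        rcases le_total (x k) 0 with h | h <;> simp [h, sq]
      nlinarith [sq_nonneg (min (x k) 0)]
    · have hA' := hA k l hkl
      nlinarith [mul_nonneg hA' (sq_nonneg (min (x k) 0 - min (x l) 0)),
        mul_le_mul_of_nonpos_left hml (mul_nonpos_of_nonneg_of_nonpos hA' hmk),
        mul_nonneg (sub_nonneg.mpr hC'.2)
          (add_nonneg (sq_nonneg (min (x k) 0)) (sq_nonneg (min (x l) 0)))]
  calc ∑ k, 2 * min (x k) 0 * (A *ᵥ x) k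
      = ∑ k, ∑ l, 2 * min (x k) 0 * (A k l * x l) := by
        simp only [mulVec, dotProduct, Finset.mul_sum]
    _ ≤ ∑ k, ∑ l, C * (min (x k) 0 ^ 2 + min (x l) 0 ^ 2) :=
        Finset.sum_le_sum fun k _ => Finset.sum_le_sum fun l _ => hterm k l
    _ = 2 * C * Fintype.card ι * ∑ k, min (x k) 0 ^ 2 := by
        simp only [mul_add, Finset.sum_add_distrib, Finset.sum_const, Finset.card_univ,
          nsmul_eq_mul, ← Finset.mul_sum]
        ring

theorem nonneg_of_hasDerivAt_mulVec {ι : Type*} [Fintype ι] {A : ℝ → Matrix ι ι ℝ}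
    {y : ℝ → ι → ℝ} (hA : ∀ k l, ContinuousOn (fun t => A t k l) (Ici 0))
    (hA_offDiag : ∀ t ≥ 0, ∀ k l, k ≠ l → 0 ≤ A t k l)
    (hy : ∀ k, ∀ t ≥ 0, HasDerivAt (fun t => y t k) ((A t *ᵥ y t) k) t)
    (hy0 : ∀ k, 0 ≤ y 0 k) :
    ∀ t ≥ 0, ∀ k, 0 ≤ y t k := by
  intro T hT k
  obtain ⟨C, hC⟩ := isCompact_Icc.exists_bound_of_continuousOn
    (continuousOn_pi.mpr fun kl : ι × ι => (hA kl.1 kl.2).mono Icc_subset_Ici_self :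
      ContinuousOn (fun t kl => A t kl.1 kl.2) (Icc 0 T))
  set u : ℝ → ℝ := fun t => ∑ k, min (y t k) 0 ^ 2
  have hu : ∀ t ∈ Icc 0 T, HasDerivAt u (∑ k, 2 * min (y t k) 0 * (A t *ᵥ y t) k) t :=
    fun t ht => HasDerivAt.fun_sum fun k _ => (hasDerivAt_min_zero_sq _).comp t (hy k t ht.1)
  have hbound : ∀ t ∈ Ico 0 T,
      ∑ k, 2 * min (y t k) 0 * (A t *ᵥ y t) k ≤ 2 * C * Fintype.card ι * u t := fun t ht =>
    sum_two_mul_min_zero_mul_mulVec_le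
      (fun k l => (norm_le_pi_norm (fun kl : ι × ι => A t kl.1 kl.2) (k, l)).trans
        (hC t (Ico_subset_Icc_self ht)))
      (hA_offDiag t ht.1) _
  have hu0 : u 0 = 0 := by simp [u, hy0]
  have huT : u T = 0 := le_antisymm
    (by simpa [hu0] using le_mul_exp_of_hasDerivAt_le_mul hT hu hbound)
    (Finset.sum_nonneg fun k _ => sq_nonneg _)
  have hk : min (y T k) 0 ^ 2 = 0 :=
    (Finset.sum_eq_zero_iff_of_nonneg fun k _ => sq_nonneg _).mp huT k (Finset.mem_univ k)
  simpa using hk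

theorem Matrix.PosDef.exists_pos_mul_norm_sq_le {ι : Type*} [Fintype ι] {M : Matrix ι ι ℝ}
    (hM : M.PosDef) : ∃ ε > 0, ∀ x : ι → ℝ, ε * ‖x‖ ^ 2 ≤ x ⬝ᵥ (M *ᵥ x) := by
  rcases isEmpty_or_nonempty ι with hι | hι
  · exact ⟨1, one_pos, fun x => by simp [Subsingleton.elim x 0]⟩
  have hQ : Continuous fun x : ι → ℝ => x ⬝ᵥ (M *ᵥ x) := by fun_prop
  obtain ⟨u, hu, hmin⟩ := (isCompact_sphere (0 : ι → ℝ) 1).exists_isMinOn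
    (NormedSpace.sphere_nonempty.mpr zero_le_one) hQ.continuousOn
  have hu0 : u ≠ 0 := ne_zero_of_mem_unit_sphere ⟨u, hu⟩
  refine ⟨u ⬝ᵥ (M *ᵥ u), by simpa using hM.dotProduct_mulVec_pos hu0, fun x => ?_⟩
  rcases eq_or_ne x 0 with rfl | hx
  · simp
  have hxn : 0 < ‖x‖ := norm_pos_iff.mpr hx
  have hx1 : ‖x‖⁻¹ • x ∈ Metric.sphere (0 : ι → ℝ) 1 := by
    simp [norm_smul, hxn.ne']
  calc u ⬝ᵥ (M *ᵥ u) * ‖x‖ ^ 2 ≤ (‖x‖⁻¹ • x) ⬝ᵥ (M *ᵥ (‖x‖⁻¹ • x)) * ‖x‖ ^ 2 :=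
        mul_le_mul_of_nonneg_right (hmin hx1) (sq_nonneg _)
    _ = x ⬝ᵥ (M *ᵥ x) := by
        rw [mulVec_smul, dotProduct_smul, smul_dotProduct, smul_eq_mul, smul_eq_mul]
        field_simp

theorem Matrix.PosDef.exists_pos_mul_sum_mul_sq_le {ι : Type*} [Fintype ι] {M : Matrix ι ι ℝ}
    (hM : M.PosDef) (w : ι → ℝ) (hw : ∀ k, 0 ≤ w k) :
    ∃ ε > 0, ∀ x : ι → ℝ, ε * ∑ k, w k * x k ^ 2 ≤ x ⬝ᵥ (M *ᵥ x) := by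
  obtain ⟨ε, hε, hM⟩ := hM.exists_pos_mul_norm_sq_le
  set S := 1 + ∑ k, w k
  have hS : 0 < S := add_pos_of_pos_of_nonneg one_pos (Finset.sum_nonneg fun k _ => hw k)
  refine ⟨ε / S, div_pos hε hS, fun x => le_trans ?_ (hM x)⟩
  have hcoord : ∀ k, x k ^ 2 ≤ ‖x‖ ^ 2 := fun k => by
    simpa [Real.norm_eq_abs, sq_abs] using
      pow_le_pow_left₀ (norm_nonneg _) (norm_le_pi_norm x k) 2
  have hsum : ∑ k, w k * x k ^ 2 ≤ S * ‖x‖ ^ 2 :=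
    calc ∑ k, w k * x k ^ 2 ≤ ∑ k, w k * ‖x‖ ^ 2 :=
          Finset.sum_le_sum fun k _ => mul_le_mul_of_nonneg_left (hcoord k) (hw k)
      _ ≤ S * ‖x‖ ^ 2 := by
          rw [← Finset.sum_mul]
          exact mul_le_mul_of_nonneg_right (le_add_of_nonneg_left zero_le_one) (sq_nonneg _)
  rw [div_mul_eq_mul_div, div_le_iff₀ hS]
  linarith [mul_le_mul_of_nonneg_left hsum hε.le]

theorem sumElim_dotProduct_fromBlocks_mulVec {m n R : Type*} [Fintype m] [Fintype n]
    [CommSemiring R] (A : Matrix m m R) (B : Matrix m n R) (C : Matrix n m R) (D : Matrix n n R)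
    (x : m → R) (y : n → R) :
    Sum.elim x y ⬝ᵥ (fromBlocks A B C D *ᵥ Sum.elim x y)
      = x ⬝ᵥ (A *ᵥ x) + x ⬝ᵥ (B *ᵥ y) + (y ⬝ᵥ (C *ᵥ x) + y ⬝ᵥ (D *ᵥ y)) := by
  simp [fromBlocks_mulVec, sumElim_dotProduct_sumElim, dotProduct_add]

noncomputable def nsairGap {n : ℕ} (β σ κ γ : Fin n → ℝ) (W : Matrix (Fin n) (Fin n) ℝ) (q : ℝ) :
    Matrix (Fin n ⊕ Fin n) (Fin n ⊕ Fin n) ℝ :=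
  fromBlocks ((diagonal β)⁻¹ * (diagonal σ + diagonal κ))
      (-((1 / 2 : ℝ) • ((diagonal β)⁻¹ * diagonal σ)))
      (-((1 / 2 : ℝ) • ((diagonal β)⁻¹ * diagonal σ))) ((diagonal β)⁻¹ * diagonal γ)
    - fromBlocks (q • W) ((1 / 2 : ℝ) • W) ((1 / 2 : ℝ) • W) ((1 - q) • W)

section NSAIR

variable {n : ℕ} {β σ κ γ : Fin n → ℝ} {W : Matrix (Fin n) (Fin n) ℝ} {q : ℝ}

theorem dotProduct_nsairGap_mulVec (hβ : ∀ i, β i ≠ 0) (hW : W.IsSymm) (a p : Fin n → ℝ) :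
    Sum.elim a p ⬝ᵥ (nsairGap β σ κ γ W q *ᵥ Sum.elim a p)
      = ∑ i, (β i)⁻¹ * ((σ i + κ i) * a i ^ 2 - σ i * a i * p i + γ i * p i ^ 2)
        - (q • a + (1 - q) • p) ⬝ᵥ (W *ᵥ (a + p)) := by
  have hinv : (diagonal β)⁻¹ = diagonal β⁻¹ :=
    inv_eq_left_inv (by simp [diagonal_mul_diagonal, inv_mul_cancel₀ (hβ _)])
  have hsymm : p ⬝ᵥ (W *ᵥ a) = a ⬝ᵥ (W *ᵥ p) := by
    rw [dotProduct_mulVec, ← mulVec_transpose, hW.eq, dotProduct_comm]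
  simp only [nsairGap, sub_mulVec, dotProduct_sub, sumElim_dotProduct_fromBlocks_mulVec, hinv,
    diagonal_mul_diagonal, diagonal_add, ← diagonal_smul, smul_mulVec, dotProduct_smul,
    smul_dotProduct, add_dotProduct, mulVec_add, dotProduct_add, hsymm]
  simp only [dotProduct, neg_mulVec, mulVec_diagonal, ← Finset.sum_add_distrib]
  refine congrArg₂ (· - ·) (Finset.sum_congr rfl fun i _ => ?_) (by ring)
  simp only [Pi.neg_apply, mulVec_diagonal, Pi.smul_apply, Pi.inv_apply, smul_eq_mul]
  ring

theorem nsair_lyapunov_deriv_le (hβ : ∀ i, 0 < β i) (hW : W.IsSymm)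
    (hW_nonneg : ∀ i j, 0 ≤ W i j) (hq0 : 0 ≤ q) (hq1 : q ≤ 1) {s a p : Fin n → ℝ}
    (hs : ∀ i, s i ≤ 1) (ha : ∀ i, 0 ≤ a i) (hp : ∀ i, 0 ≤ p i) :
    ∑ i, (β i)⁻¹ * (2 * a i * (q * β i * s i * (∑ j, W i j * (a j + p j)) - σ i * a i - κ i * a i)
        + 2 * p i * ((1 - q) * β i * s i * (∑ j, W i j * (a j + p j)) + σ i * a i - γ i * p i))
      ≤ -2 * (Sum.elim a p ⬝ᵥ (nsairGap β σ κ γ W q *ᵥ Sum.elim a p)) := by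
  rw [dotProduct_nsairGap_mulVec (fun i => (hβ i).ne') hW]
  calc _ ≤ ∑ i, (2 * ((q * a i + (1 - q) * p i) * ∑ j, W i j * (a j + p j))
          - 2 * ((β i)⁻¹ * ((σ i + κ i) * a i ^ 2 - σ i * a i * p i + γ i * p i ^ 2))) :=
        Finset.sum_le_sum fun i _ => ?_
    _ = _ := by
        simp only [Finset.sum_sub_distrib, ← Finset.mul_sum, dotProduct, mulVec, Pi.add_apply,
          Pi.smul_apply, smul_eq_mul]
        ring
  have hinfection : 0 ≤ (q * a i + (1 - q) * p i) * ∑ j, W i j * (a j + p j) :=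
    mul_nonneg (add_nonneg (mul_nonneg hq0 (ha i)) (mul_nonneg (sub_nonneg.mpr hq1) (hp i)))
      (Finset.sum_nonneg fun j _ => mul_nonneg (hW_nonneg i j) (add_nonneg (ha j) (hp j)))
  linear_combination (2 * s i * ((q * a i + (1 - q) * p i) * ∑ j, W i j * (a j + p j)))
      * inv_mul_cancel₀ (hβ i).ne' + 2 * mul_le_mul_of_nonneg_right (hs i) hinfection

variable {s a p : Fin n → ℝ → ℝ}

theorem nsair_susceptible_nonneg
    (hs : ∀ i, ∀ t ≥ (0 : ℝ), HasDerivAt (s i)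
      (-(β i) * s i t * ∑ j, W i j * (a j t + p j t)) t)
    (ha : ∀ i, ContinuousOn (a i) (Ici 0)) (hp : ∀ i, ContinuousOn (p i) (Ici 0))
    (hs0 : ∀ i, 0 ≤ s i 0) :
    ∀ i, ∀ t ≥ 0, 0 ≤ s i t := by
  refine fun i t ht => nonneg_of_hasDerivAt_mulVec (y := fun t i => s i t)
    (A := fun t => diagonal fun i => -(β i) * ∑ j, W i j * (a j t + p j t))
    (fun k l => ?_) (fun t _ k l hkl => by simp [hkl]) (fun i t ht => ?_) hs0 t ht i
  · by_cases hkl : k = l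
    · subst hkl
      simp only [diagonal_apply_eq]
      exact continuousOn_const.mul (continuousOn_finsetSum _ fun j _ =>
        continuousOn_const.mul ((ha j).add (hp j)))
    · simpa [hkl] using continuousOn_const
  · simpa [mulVec_diagonal, mul_right_comm] using hs i t ht

def nsairInfectedMatrix (β σ κ γ : Fin n → ℝ) (W : Matrix (Fin n) (Fin n) ℝ) (q : ℝ)
    (s : Fin n → ℝ) : Matrix (Fin n ⊕ Fin n) (Fin n ⊕ Fin n) ℝ :=
  fromBlocks (diagonal (fun i => q * β i * s i) * W - diagonal (σ + κ))
    (diagonal (fun i => q * β i * s i) * W)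
    (diagonal (fun i => (1 - q) * β i * s i) * W + diagonal σ)
    (diagonal (fun i => (1 - q) * β i * s i) * W - diagonal γ)

theorem nsairInfectedMatrix_mulVec (s a p : Fin n → ℝ) :
    nsairInfectedMatrix β σ κ γ W q s *ᵥ Sum.elim a p
      = Sum.elim (fun i => q * β i * s i * (∑ j, W i j * (a j + p j)) - σ i * a i - κ i * a i)
          (fun i => (1 - q) * β i * s i * (∑ j, W i j * (a j + p j)) + σ i * a i - γ i * p i) := by
  have hI : ∀ i, ∑ j, W i j * (a j + p j) = (W *ᵥ a) i + (W *ᵥ p) i := fun i => by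
    simp [mulVec, dotProduct, mul_add, Finset.sum_add_distrib]
  ext (i | i) <;>
    simp only [nsairInfectedMatrix, fromBlocks_mulVec, Sum.elim_inl, Sum.elim_inr,
      Sum.elim_comp_inl, Sum.elim_comp_inr, Pi.add_apply, Pi.sub_apply, sub_mulVec, add_mulVec,
      ← mulVec_mulVec, mulVec_diagonal, hI] <;>
    ring

theorem nsairInfectedMatrix_nonneg_of_ne (hβ : ∀ i, 0 ≤ β i) (hσ : ∀ i, 0 ≤ σ i)
    (hW : ∀ i j, 0 ≤ W i j) (hq0 : 0 ≤ q) (hq1 : q ≤ 1) {s : Fin n → ℝ} (hs : ∀ i, 0 ≤ s i)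
    {k l : Fin n ⊕ Fin n} (hkl : k ≠ l) : 0 ≤ nsairInfectedMatrix β σ κ γ W q s k l := by
  have hcoef : ∀ c, 0 ≤ c → ∀ i j, 0 ≤ c * β i * s i * W i j := fun c hc i j =>
    mul_nonneg (mul_nonneg (mul_nonneg hc (hβ i)) (hs i)) (hW i j)
  have hq : 0 ≤ 1 - q := sub_nonneg.mpr hq1
  rcases k with i | i <;> rcases l with j | j
  · have hij : i ≠ j := fun h => hkl (congrArg Sum.inl h)
    simpa [nsairInfectedMatrix, diagonal_mul, diagonal_apply_ne _ hij] using hcoef q hq0 i j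
  · simpa [nsairInfectedMatrix, diagonal_mul] using hcoef q hq0 i j
  · have hσij : 0 ≤ diagonal σ i j := by
      by_cases hij : i = j
      · simpa [hij] using hσ j
      · simp [hij]
    simpa [nsairInfectedMatrix, diagonal_mul] using add_nonneg (hcoef _ hq i j) hσij
  · have hij : i ≠ j := fun h => hkl (congrArg Sum.inr h)
    simpa [nsairInfectedMatrix, diagonal_mul, diagonal_apply_ne _ hij] using hcoef _ hq i j

theorem nsair_infected_nonneg (hβ : ∀ i, 0 ≤ β i) (hσ : ∀ i, 0 ≤ σ i)
    (hW : ∀ i j, 0 ≤ W i j) (hq0 : 0 ≤ q) (hq1 : q ≤ 1)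
    (hs_cont : ∀ i, ContinuousOn (s i) (Ici 0)) (hs_nonneg : ∀ i, ∀ t ≥ 0, 0 ≤ s i t)
    (ha : ∀ i, ∀ t ≥ (0 : ℝ), HasDerivAt (a i)
      (q * β i * s i t * (∑ j, W i j * (a j t + p j t)) - σ i * a i t - κ i * a i t) t)
    (hp : ∀ i, ∀ t ≥ (0 : ℝ), HasDerivAt (p i)
      ((1 - q) * β i * s i t * (∑ j, W i j * (a j t + p j t)) + σ i * a i t - γ i * p i t) t)
    (ha0 : ∀ i, 0 ≤ a i 0) (hp0 : ∀ i, 0 ≤ p i 0) :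
    ∀ i, ∀ t ≥ 0, 0 ≤ a i t ∧ 0 ≤ p i t := by
  have key := nonneg_of_hasDerivAt_mulVec
    (y := fun t => Sum.elim (fun i => a i t) (fun i => p i t))
    (A := fun t => nsairInfectedMatrix β σ κ γ W q fun i => s i t) ?_
    (fun t ht k l => nsairInfectedMatrix_nonneg_of_ne hβ hσ hW hq0 hq1 (hs_nonneg · t ht)) ?_
    (by rintro (i | i) <;> simp [ha0, hp0])
  · exact fun i t ht => ⟨key t ht (Sum.inl i), key t ht (Sum.inr i)⟩
  · rintro (i | i) (j | j) <;>
      simp only [nsairInfectedMatrix, fromBlocks_apply₁₁, fromBlocks_apply₁₂, fromBlocks_apply₂₁,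
        fromBlocks_apply₂₂, Matrix.sub_apply, Matrix.add_apply, diagonal_mul, diagonal_apply] <;>
      fun_prop
  · rintro (i | i) t ht <;> simp only [nsairInfectedMatrix_mulVec, Sum.elim_inl, Sum.elim_inr]
    · exact ha i t ht
    · exact hp i t ht

theorem nsair_susceptible_le_initial (hβ : ∀ i, 0 ≤ β i) (hW : ∀ i j, 0 ≤ W i j)
    (hs : ∀ i, ∀ t ≥ (0 : ℝ), HasDerivAt (s i)
      (-(β i) * s i t * ∑ j, W i j * (a j t + p j t)) t)
    (hs_nonneg : ∀ i, ∀ t ≥ 0, 0 ≤ s i t) (hap_nonneg : ∀ i, ∀ t ≥ 0, 0 ≤ a i t ∧ 0 ≤ p i t) :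
    ∀ i, ∀ t ≥ 0, s i t ≤ s i 0 := by
  intro i t ht
  refine antitoneOn_of_hasDerivWithinAt_nonpos (convex_Ici 0)
    (f' := fun u => -(β i) * s i u * ∑ j, W i j * (a j u + p j u))
    (HasDerivAt.continuousOn (hs i)) (fun u hu => ?_) (fun u hu => ?_) self_mem_Ici ht ht
  · rw [interior_Ici] at hu
    exact (hs i u hu.le).hasDerivWithinAt
  · rw [interior_Ici] at hu
    have hI : 0 ≤ ∑ j, W i j * (a j u + p j u) := Finset.sum_nonneg fun j _ =>
      mul_nonneg (hW i j) (add_nonneg (hap_nonneg j u hu.le).1 (hap_nonneg j u hu.le).2)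
    nlinarith [mul_nonneg (mul_nonneg (hβ i) (hs_nonneg i u hu.le)) hI]

theorem nsair_lyapunov_le_exp (hβ : ∀ i, 0 < β i) (hW : W.IsSymm)
    (hW_nonneg : ∀ i j, 0 ≤ W i j) (hq0 : 0 ≤ q) (hq1 : q ≤ 1)
    (ha : ∀ i, ∀ t ≥ (0 : ℝ), HasDerivAt (a i)
      (q * β i * s i t * (∑ j, W i j * (a j t + p j t)) - σ i * a i t - κ i * a i t) t)
    (hp : ∀ i, ∀ t ≥ (0 : ℝ), HasDerivAt (p i)
      ((1 - q) * β i * s i t * (∑ j, W i j * (a j t + p j t)) + σ i * a i t - γ i * p i t) t)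
    (hs_le : ∀ i, ∀ t ≥ 0, s i t ≤ 1) (hap_nonneg : ∀ i, ∀ t ≥ 0, 0 ≤ a i t ∧ 0 ≤ p i t)
    (hgap : (nsairGap β σ κ γ W q).PosDef) :
    ∃ c > 0, ∀ t ≥ 0, ∑ i, (β i)⁻¹ * (a i t ^ 2 + p i t ^ 2)
      ≤ (∑ i, (β i)⁻¹ * (a i 0 ^ 2 + p i 0 ^ 2)) * exp (-c * t) := by
  obtain ⟨ε, hε, hgap⟩ := hgap.exists_pos_mul_sum_mul_sq_le
    (Sum.elim (fun i => (β i)⁻¹) fun i => (β i)⁻¹)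
    (by rintro (i | i) <;> exact (inv_pos.mpr (hβ i)).le)
  refine ⟨2 * ε, by positivity, fun T hT => le_mul_exp_of_hasDerivAt_le_mul
    (f := fun t => ∑ i, (β i)⁻¹ * (a i t ^ 2 + p i t ^ 2)) hT
    (fun t ht => HasDerivAt.fun_sum fun i _ =>
      (((ha i t ht.1).pow 2).add ((hp i t ht.1).pow 2)).const_mul _) fun t ht => ?_⟩
  have hV := hgap (Sum.elim (fun i => a i t) fun i => p i t)
  simp only [Fintype.sum_sum_type, Sum.elim_inl, Sum.elim_inr, ← Finset.sum_add_distrib,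
    ← mul_add] at hV
  have hderiv := nsair_lyapunov_deriv_le (σ := σ) (κ := κ) (γ := γ) hβ hW hW_nonneg hq0 hq1
    (fun i => hs_le i t ht.1) (fun i => (hap_nonneg i t ht.1).1)
    (fun i => (hap_nonneg i t ht.1).2)
  refine le_trans (le_of_eq ?_) (hderiv.trans (by linarith))
  refine Finset.sum_congr rfl fun i _ => ?_
  push_cast
  ring

theorem nsair_infected_tendsto_zero (hβ : ∀ i, 0 < β i) (hW : W.IsSymm)
    (hW_nonneg : ∀ i j, 0 ≤ W i j) (hq0 : 0 ≤ q) (hq1 : q ≤ 1)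
    (ha : ∀ i, ∀ t ≥ (0 : ℝ), HasDerivAt (a i)
      (q * β i * s i t * (∑ j, W i j * (a j t + p j t)) - σ i * a i t - κ i * a i t) t)
    (hp : ∀ i, ∀ t ≥ (0 : ℝ), HasDerivAt (p i)
      ((1 - q) * β i * s i t * (∑ j, W i j * (a j t + p j t)) + σ i * a i t - γ i * p i t) t)
    (hs_le : ∀ i, ∀ t ≥ 0, s i t ≤ 1) (hap_nonneg : ∀ i, ∀ t ≥ 0, 0 ≤ a i t ∧ 0 ≤ p i t)
    (hgap : (nsairGap β σ κ γ W q).PosDef) (i : Fin n) :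
    Tendsto (a i) atTop (𝓝 0) ∧ Tendsto (p i) atTop (𝓝 0) := by
  obtain ⟨c, hc, hV⟩ :=
    nsair_lyapunov_le_exp hβ hW hW_nonneg hq0 hq1 ha hp hs_le hap_nonneg hgap
  set V₀ := ∑ i, (β i)⁻¹ * (a i 0 ^ 2 + p i 0 ^ 2)
  have hbound : ∀ t ≥ 0, a i t ^ 2 + p i t ^ 2 ≤ β i * (V₀ * exp (-c * t)) := fun t ht => by
    have hterm : (β i)⁻¹ * (a i t ^ 2 + p i t ^ 2) ≤ V₀ * exp (-c * t) :=
      (Finset.single_le_sum (f := fun j => (β j)⁻¹ * (a j t ^ 2 + p j t ^ 2))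
        (fun j _ => mul_nonneg (inv_pos.mpr (hβ j)).le (by positivity)) (Finset.mem_univ i)).trans
        (hV t ht)
    rwa [inv_mul_le_iff₀ (hβ i)] at hterm
  have hlim : Tendsto (fun t => β i * (V₀ * exp (-c * t))) atTop (𝓝 0) := by
    simpa [mul_assoc] using (tendsto_exp_atBot.comp
      (tendsto_id.const_mul_atTop_of_neg (neg_neg_of_pos hc))).const_mul (β i * V₀)
  constructor
  · exact tendsto_zero_of_sq_le hlim ((eventually_ge_atTop 0).mono fun t ht => by
      nlinarith [hbound t ht, sq_nonneg (p i t)])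
  · exact tendsto_zero_of_sq_le hlim ((eventually_ge_atTop 0).mono fun t ht => by
      nlinarith [hbound t ht, sq_nonneg (a i t)])

end NSAIR

theorem nsairs_dfe_sufficient_condition_general
    (n : ℕ) (s a p r : Fin n → ℝ → ℝ)
    (β γ κ σ δ : Fin n → ℝ) (Wm : Matrix (Fin n) (Fin n) ℝ) (q : ℝ)
    (hβ : ∀ i, 0 < β i)
    (hσ : ∀ i, 0 < σ i) (hδ : ∀ i, δ i = 0)
    (hWsymm : Wm.IsSymm) (hWnonneg : ∀ i j, 0 ≤ Wm i j)
    (hq0 : 0 ≤ q) (hq1 : q ≤ 1)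
    (hs : ∀ i, ∀ t ≥ (0 : ℝ), HasDerivAt (s i)
      (-(β i) * s i t * (∑ j, Wm i j * (a j t + p j t)) + δ i * r i t) t)
    (ha : ∀ i, ∀ t ≥ (0 : ℝ), HasDerivAt (a i)
      (q * β i * s i t * (∑ j, Wm i j * (a j t + p j t)) - σ i * a i t - κ i * a i t) t)
    (hp : ∀ i, ∀ t ≥ (0 : ℝ), HasDerivAt (p i)
      ((1 - q) * β i * s i t * (∑ j, Wm i j * (a j t + p j t)) + σ i * a i t - γ i * p i t) t)
    (h0 : ∀ i, s i 0 ∈ Set.Icc (0 : ℝ) 1 ∧ a i 0 ∈ Set.Icc (0 : ℝ) 1 ∧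
      p i 0 ∈ Set.Icc (0 : ℝ) 1 ∧ r i 0 ∈ Set.Icc (0 : ℝ) 1)
    (Bm Km Γm Sm : Matrix (Fin n) (Fin n) ℝ)
    (hBm : Bm = Matrix.diagonal β) (hKm : Km = Matrix.diagonal κ)
    (hΓm : Γm = Matrix.diagonal γ) (hSm : Sm = Matrix.diagonal σ)
    (hLoewner :
      (Matrix.fromBlocks (Bm⁻¹ * (Sm + Km)) (-((1 / 2 : ℝ) • (Bm⁻¹ * Sm)))
          (-((1 / 2 : ℝ) • (Bm⁻¹ * Sm))) (Bm⁻¹ * Γm)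
        - Matrix.fromBlocks (q • Wm) ((1 / 2 : ℝ) • Wm)
          ((1 / 2 : ℝ) • Wm) ((1 - q) • Wm)).PosDef) :
    ∀ i, Tendsto (a i) atTop (nhds 0) ∧ Tendsto (p i) atTop (nhds 0) := by
  subst hBm hKm hΓm hSm
  simp only [hδ, zero_mul, add_zero] at hs
  have hs_nonneg := nsair_susceptible_nonneg hs (fun i => HasDerivAt.continuousOn (ha i))
    (fun i => HasDerivAt.continuousOn (hp i)) fun i => (h0 i).1.1
  have hap_nonneg := nsair_infected_nonneg (fun i => (hβ i).le) (fun i => (hσ i).le) hWnonneg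
    hq0 hq1 (fun i => HasDerivAt.continuousOn (hs i)) hs_nonneg ha hp
    (fun i => (h0 i).2.1.1) fun i => (h0 i).2.2.1.1
  have hs_le : ∀ i, ∀ t ≥ 0, s i t ≤ 1 := fun i t ht =>
    (nsair_susceptible_le_initial (fun i => (hβ i).le) hWnonneg hs hs_nonneg hap_nonneg i t
      ht).trans (h0 i).1.2
  exact nsair_infected_tendsto_zero hβ hWsymm hWnonneg hq0 hq1 ha hp hs_le hap_nonneg hLoewner

/-- Sufficient condition for convergence to the disease-free state of the
networked SAIR(S) model with permanent immunity (`δ_i = 0`): if the `2n×2n` block matrix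
`[[qW, (1/2)W], [(1/2)W, (1−q)W]]` is strictly below
`[[B⁻¹(Σ+K), −(1/2)B⁻¹Σ], [−(1/2)B⁻¹Σ, B⁻¹Γ]]` in the Loewner (positive-definite) order,
then along every solution starting in the simplex, `a_i(t) → 0` and `p_i(t) → 0`. -/
theorem nsairs_dfe_sufficient_condition
    (n : ℕ) (s a p r : Fin n → ℝ → ℝ)
    (β γ κ σ δ : Fin n → ℝ) (Wm : Matrix (Fin n) (Fin n) ℝ) (q : ℝ)
    (hβ : ∀ i, 0 < β i) (hγ : ∀ i, 0 < γ i) (hκ : ∀ i, 0 < κ i)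
    (hσ : ∀ i, 0 < σ i) (hδ : ∀ i, δ i = 0)
    (hWsymm : Wm.IsSymm) (hWnonneg : ∀ i j, 0 ≤ Wm i j)
    (hq0 : 0 ≤ q) (hq1 : q ≤ 1)
    (hs : ∀ i, ∀ t ≥ (0 : ℝ), HasDerivAt (s i)
      (-(β i) * s i t * (∑ j, Wm i j * (a j t + p j t)) + δ i * r i t) t)
    (ha : ∀ i, ∀ t ≥ (0 : ℝ), HasDerivAt (a i)
      (q * β i * s i t * (∑ j, Wm i j * (a j t + p j t)) - σ i * a i t - κ i * a i t) t)
    (hp : ∀ i, ∀ t ≥ (0 : ℝ), HasDerivAt (p i)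
      ((1 - q) * β i * s i t * (∑ j, Wm i j * (a j t + p j t)) + σ i * a i t - γ i * p i t) t)
    (hr : ∀ i, ∀ t ≥ (0 : ℝ), HasDerivAt (r i)
      (κ i * a i t + γ i * p i t - δ i * r i t) t)
    (h0 : ∀ i, s i 0 ∈ Set.Icc (0 : ℝ) 1 ∧ a i 0 ∈ Set.Icc (0 : ℝ) 1 ∧
      p i 0 ∈ Set.Icc (0 : ℝ) 1 ∧ r i 0 ∈ Set.Icc (0 : ℝ) 1)
    (hsum0 : ∀ i, s i 0 + a i 0 + p i 0 + r i 0 = 1)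
    (Bm Km Γm Sm : Matrix (Fin n) (Fin n) ℝ)
    (hBm : Bm = Matrix.diagonal β) (hKm : Km = Matrix.diagonal κ)
    (hΓm : Γm = Matrix.diagonal γ) (hSm : Sm = Matrix.diagonal σ)
    (hLoewner :
      (Matrix.fromBlocks (Bm⁻¹ * (Sm + Km)) (-((1 / 2 : ℝ) • (Bm⁻¹ * Sm)))
          (-((1 / 2 : ℝ) • (Bm⁻¹ * Sm))) (Bm⁻¹ * Γm)
        - Matrix.fromBlocks (q • Wm) ((1 / 2 : ℝ) • Wm)
          ((1 / 2 : ℝ) • Wm) ((1 - q) • Wm)).PosDef) :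
    ∀ i, Tendsto (a i) atTop (nhds 0) ∧ Tendsto (p i) atTop (nhds 0) :=
  nsairs_dfe_sufficient_condition_general n s a p r β γ κ σ δ Wm q hβ hσ hδ hWsymm hWnonneg hq0 hq1
    hs ha hp h0 Bm Km Γm Sm hBm hKm hΓm hSm hLoewner
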